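/- Let t ∈ ℂ, let Δ(u,z) = (t−u)z⁴ − 4(t−1)uz³ + 2u(2tu + t − u − 2)z² − 4u²(t−1)z + u²(t−u), and let F(u,z) = u(z² − 2z + u)²/(z² − 2uz + u)². For every (u,z) ∈ ℂ² with z² − 2uz + u ≠ 0 and Δ(u,z) = 0, one has F(u,z) = t. In other words, the discriminant curve Δ = 0 of the 2-web of minimal sections is contained in the level set F = t of the first integral of the Riccati foliation, so Δ is invariant by (a leaf of) the Riccati foliation. -/

import Mathlib

/-- The first integral of the Riccati foliation. -/
noncomputable def Fint (u z : ℂ) : ℂ :=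
  u * (z ^ 2 - 2 * z + u) ^ 2 / (z ^ 2 - 2 * u * z + u) ^ 2

/-- The defining equation of the discriminant curve of the 2-web of minimal sections. -/
def Δdisc (t u z : ℂ) : ℂ :=
  (t - u) * z ^ 4 - 4 * (t - 1) * u * z ^ 3 + 2 * u * (2 * t * u + t - u - 2) * z ^ 2
    - 4 * u ^ 2 * (t - 1) * z + u ^ 2 * (t - u)

theorem Δdisc_eq (t u z : ℂ) :
    Δdisc t u z = t * (z ^ 2 - 2 * u * z + u) ^ 2 - u * (z ^ 2 - 2 * z + u) ^ 2 := by
  unfold Δdisc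
  ring

/-- The discriminant curve `Δ = 0` of the 2-web of minimal sections is contained in the
level set `F = t` of the first integral of the Riccati foliation: for every `(u,z)` with
`z² − 2uz + u ≠ 0` and `Δ(u,z) = 0`, one has `F(u,z) = t`. -/
theorem discriminant_is_leaf (t : ℂ) (u z : ℂ) (h : z ^ 2 - 2 * u * z + u ≠ 0)
    (hΔ : Δdisc t u z = 0) : Fint u z = t := by
  rw [Δdisc_eq, sub_eq_zero] at hΔ
  rw [Fint, div_eq_iff (pow_ne_zero 2 h)]
  exact hΔ.symm
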